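/- Let C ≥ 1 and suppose that for every integer n ≥ 3 there exists a symmetric nonnegative edge-weight function W_n on the finite grid graph Grid_n such that for all u, v ∈ {0,…,n−1}²: ‖u−v‖₂ − 1 ≤ dist_{W_n}(u,v) ≤ ‖u−v‖₂ + C·(1 + ‖u−v‖₂^(8/9)). Then there exist a constant C′ > 0 and a symmetric nonnegative edge-weight function W on the infinite grid graph Grid such that for all u, v ∈ ℤ²: ‖u−v‖₂ − 1 ≤ dist_W(u,v) ≤ ‖u−v‖₂ + C′·(1 + ‖u−v‖₂^(8/9)). -/

import Mathlib

/-- Vertices of the grid graph: integer points of the plane. -/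
abbrev V : Type := ℤ × ℤ

/-- Adjacency in the grid graph: `u` and `v` are joined iff `‖u - v‖₁ = 1`. -/
def gridAdj (u v : V) : Prop := |u.1 - v.1| + |u.2 - v.2| = 1

/-- Euclidean distance between two integer points. -/
noncomputable def euclid (u v : V) : ℝ :=
  Real.sqrt (((u.1 : ℝ) - (v.1 : ℝ)) ^ 2 + ((u.2 : ℝ) - (v.2 : ℝ)) ^ 2)

/-- The weight of a walk (list of vertices): the sum of `w` over consecutive pairs. -/
noncomputable def walkWeight (w : V → V → ℝ) (p : List V) : ℝ :=
  (List.zipWith w p p.tail).sum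

/-- `p` is a walk in the grid graph from `u` to `v`. -/
def IsWalk (u v : V) (p : List V) : Prop :=
  p.Chain' gridAdj ∧ p.head? = some u ∧ p.getLast? = some v

/-- Weighted graph distance in the grid graph: the infimum of weights of walks. -/
noncomputable def gridDist (w : V → V → ℝ) (u v : V) : ℝ :=
  sInf { c | ∃ p : List V, IsWalk u v p ∧ c = walkWeight w p }

/-- The vertex set `{0, …, n-1}²` of the finite grid graph `Grid_n`. -/
def box (n : ℕ) : Set V := {v | 0 ≤ v.1 ∧ v.1 < n ∧ 0 ≤ v.2 ∧ v.2 < n}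

/-- Weighted graph distance in the grid graph restricted to a vertex set `S`:
the infimum of weights of walks all of whose vertices lie in `S`. -/
noncomputable def gridDistOn (S : Set V) (w : V → V → ℝ) (u v : V) : ℝ :=
  sInf { c | ∃ p : List V, IsWalk u v p ∧ (∀ x ∈ p, x ∈ S) ∧ c = walkWeight w p }

/-!
Translate each `W_n` so that the box `{0,…,n-1}²` becomes centred at the origin; these translated
boxes exhaust `ℤ²`. Along an ultrafilter on `ℕ`, the translated distances `d_n(a, b)` lie in
`[0, U(a, b)]`, with `U` the (translation-invariant) upper bound of the hypothesis, and therefore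
converge for every pair; their limit is the weight `W` on `ℤ²`, and `C' = C` works.
The lower bound passes to the limit because `d_n` satisfies the triangle inequality, so the
`d_n`-weight of any walk dominates `d_n` of its endpoints. For the upper bound, a near-optimal
`W_n`-walk may be taken without repeated vertices, and the lower bound keeps it in a fixed
Euclidean ball around its start; so only finitely many walks are candidates, and the ultrafilter
selects one whose `d_n`-weight is near-optimal for ultrafilter-many `n`, hence in the limit.
-/

open Filter Topology

section WalkWeight

variable (w : V → V → ℝ)

@[simp] lemma walkWeight_nil : walkWeight w [] = 0 := rfl

@[simp] lemma walkWeight_singleton (a : V) : walkWeight w [a] = 0 := rfl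

@[simp] lemma walkWeight_cons_cons (a b : V) (p : List V) :
    walkWeight w (a :: b :: p) = w a b + walkWeight w (b :: p) := by
  simp [walkWeight]

lemma walkWeight_append_cons (x : V) (q : List V) : ∀ p : List V,
    walkWeight w (p ++ x :: q) = walkWeight w (p ++ [x]) + walkWeight w (x :: q)
  | [] => by simp
  | [a] => by simp
  | a :: b :: p => by
    simp only [List.cons_append, walkWeight_cons_cons] at *
    rw [← List.cons_append, walkWeight_append_cons x q (b :: p), List.cons_append, add_assoc]

lemma walkWeight_map (f : V → V) (p : List V) :
    walkWeight w (p.map f) = walkWeight (fun a b => w (f a) (f b)) p := by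
  rw [walkWeight, walkWeight, ← List.map_tail, List.zipWith_map]

variable {w}

lemma walkWeight_nonneg (hw : ∀ a b, 0 ≤ w a b) : ∀ p : List V, 0 ≤ walkWeight w p
  | [] | [_] => by simp
  | a :: b :: p => by simpa using add_nonneg (hw a b) (walkWeight_nonneg hw (b :: p))

lemma walkWeight_reverse (hw : ∀ a b, w a b = w b a) : ∀ p : List V,
    walkWeight w p.reverse = walkWeight w p
  | [] | [_] => rfl
  | a :: b :: p => by
    rw [List.reverse_cons, List.reverse_cons, List.append_assoc, List.singleton_append,
      walkWeight_append_cons, ← List.reverse_cons, walkWeight_reverse hw (b :: p)]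
    simp [hw a b, add_comm]

lemma tendsto_walkWeight {ι : Type*} {l : Filter ι} {w : ι → V → V → ℝ} {W : V → V → ℝ}
    (h : ∀ a b, Tendsto (fun i => w i a b) l (𝓝 (W a b))) :
    ∀ p : List V, Tendsto (fun i => walkWeight (w i) p) l (𝓝 (walkWeight W p))
  | [] | [_] => by simpa using tendsto_const_nhds
  | a :: b :: p => by simpa using (h a b).add (tendsto_walkWeight h (b :: p))

end WalkWeight

section Walks

lemma isWalk_iff {u v : V} {p : List V} :
    IsWalk u v p ↔ p.IsChain gridAdj ∧ p.head? = some u ∧ p.getLast? = some v := Iff.rfl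

lemma gridAdj_comm {a b : V} : gridAdj a b ↔ gridAdj b a := by
  simp only [gridAdj, abs_sub_comm a.1, abs_sub_comm a.2]

lemma isWalk_singleton (u : V) : IsWalk u u [u] := by simp [isWalk_iff]

lemma IsWalk.cons {u u' v : V} {p : List V} (h : IsWalk u' v p) (hu : gridAdj u u') :
    IsWalk u v (u :: p) := by
  obtain ⟨hc, hh, hl⟩ := h
  obtain ⟨t, rfl⟩ := List.head?_eq_some_iff.1 hh
  exact ⟨List.isChain_cons_cons.2 ⟨hu, hc⟩, rfl, by simpa using hl⟩

lemma isWalk_append_cons {u v x : V} {p q : List V} :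
    IsWalk u v (p ++ x :: q) ↔ IsWalk u x (p ++ [x]) ∧ IsWalk x v (x :: q) := by
  rw [← List.singleton_append, ← List.append_assoc]
  cases q <;>
    simp [isWalk_iff, List.isChain_append, List.head?_append, List.getLast?_append] <;> tauto

lemma IsWalk.head_mem {u v : V} {p : List V} (h : IsWalk u v p) : u ∈ p :=
  List.mem_of_mem_head? h.2.1

lemma IsWalk.getLast_mem {u v : V} {p : List V} (h : IsWalk u v p) : v ∈ p :=
  List.mem_of_mem_getLast? h.2.2

lemma IsWalk.reverse {u v : V} {p : List V} (h : IsWalk u v p) : IsWalk v u p.reverse := by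
  obtain ⟨hc, hh, hl⟩ := h
  refine ⟨List.isChain_reverse.2 (hc.imp fun _ _ => gridAdj_comm.1), ?_, ?_⟩
  · rwa [List.head?_reverse]
  · rwa [List.getLast?_reverse]

lemma IsWalk.map {u v : V} {p : List V} {f : V → V} (hf : ∀ a b, gridAdj a b → gridAdj (f a) (f b))
    (h : IsWalk u v p) : IsWalk (f u) (f v) (p.map f) := by
  obtain ⟨hc, hh, hl⟩ := h
  exact ⟨(List.isChain_map f).2 (hc.imp fun a b => hf a b), by simp [hh], by simp [hl]⟩

lemma List.exists_eq_append_cons_append_cons_of_not_nodup {α : Type*} :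
    ∀ {p : List α}, ¬p.Nodup → ∃ x l₁ l₂ l₃, p = l₁ ++ x :: (l₂ ++ x :: l₃)
  | [], h => absurd List.nodup_nil h
  | a :: p, h => by
    by_cases ha : a ∈ p
    · obtain ⟨l₂, l₃, rfl⟩ := List.append_of_mem ha
      exact ⟨a, [], l₂, l₃, rfl⟩
    · obtain ⟨x, l₁, l₂, l₃, rfl⟩ :=
        exists_eq_append_cons_append_cons_of_not_nodup fun hp => h (List.nodup_cons.2 ⟨ha, hp⟩)
      exact ⟨x, a :: l₁, l₂, l₃, rfl⟩

lemma IsWalk.exists_nodup_walkWeight_le {w : V → V → ℝ} (hw : ∀ a b, 0 ≤ w a b) {u v : V}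
    {p : List V} (hp : IsWalk u v p) :
    ∃ q, IsWalk u v q ∧ q.Nodup ∧ q ⊆ p ∧ walkWeight w q ≤ walkWeight w p := by
  by_cases hnd : p.Nodup
  · exact ⟨p, hp, hnd, List.Subset.refl p, le_rfl⟩
  obtain ⟨x, l₁, l₂, l₃, rfl⟩ := List.exists_eq_append_cons_append_cons_of_not_nodup hnd
  have hloop : x :: (l₂ ++ x :: l₃) = (x :: l₂) ++ x :: l₃ := rfl
  rw [isWalk_append_cons, hloop, isWalk_append_cons (p := x :: l₂)] at hp
  have hshort : IsWalk u v (l₁ ++ x :: l₃) := isWalk_append_cons.2 ⟨hp.1, hp.2.2⟩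
  obtain ⟨q, hq, hqnd, hqp, hqw⟩ := hshort.exists_nodup_walkWeight_le hw
  refine ⟨q, hq, hqnd, fun y hy => by
    have := hqp hy; simp only [List.mem_append, List.mem_cons] at this ⊢; tauto,
    hqw.trans ?_⟩
  rw [walkWeight_append_cons w x l₃ l₁, walkWeight_append_cons w x (l₂ ++ x :: l₃) l₁, hloop,
    walkWeight_append_cons w x l₃ (x :: l₂)]
  linarith [walkWeight_nonneg hw (x :: l₂ ++ [x])]
termination_by p.length
decreasing_by subst_vars; simp

lemma exists_gridAdj_natAbs_lt {u v : V} (h : u ≠ v) : ∃ u', gridAdj u u' ∧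
    (u'.1 - v.1).natAbs + (u'.2 - v.2).natAbs < (u.1 - v.1).natAbs + (u.2 - v.2).natAbs := by
  rcases lt_trichotomy u.1 v.1 with h₁ | h₁ | h₁
  · exact ⟨(u.1 + 1, u.2), by simp [gridAdj], by simp; omega⟩
  · rcases lt_trichotomy u.2 v.2 with h₂ | h₂ | h₂
    · exact ⟨(u.1, u.2 + 1), by simp [gridAdj], by simp; omega⟩
    · exact absurd (Prod.ext h₁ h₂) h
    · exact ⟨(u.1, u.2 - 1), by simp [gridAdj], by simp; omega⟩
  · exact ⟨(u.1 - 1, u.2), by simp [gridAdj], by simp; omega⟩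

lemma exists_isWalk (u v : V) : ∃ p, IsWalk u v p := by
  by_cases h : u = v
  · exact h ▸ ⟨[u], isWalk_singleton u⟩
  obtain ⟨u', hu', hlt⟩ := exists_gridAdj_natAbs_lt h
  obtain ⟨p, hp⟩ := exists_isWalk u' v
  exact ⟨u :: p, hp.cons hu'⟩
termination_by (u.1 - v.1).natAbs + (u.2 - v.2).natAbs
decreasing_by exact hlt

end Walks

section GridDistOn

variable {S : Set V} {w : V → V → ℝ} {u v : V}

lemma gridDistOn_le_walkWeight (hw : ∀ a b, 0 ≤ w a b) {p : List V} (hp : IsWalk u v p)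
    (hpS : ∀ x ∈ p, x ∈ S) : gridDistOn S w u v ≤ walkWeight w p :=
  csInf_le ⟨0, by rintro _ ⟨q, -, -, rfl⟩; exact walkWeight_nonneg hw q⟩ ⟨p, hp, hpS, rfl⟩

lemma le_gridDistOn {c : ℝ} (hne : ∃ p, IsWalk u v p ∧ ∀ x ∈ p, x ∈ S)
    (h : ∀ p, IsWalk u v p → (∀ x ∈ p, x ∈ S) → c ≤ walkWeight w p) : c ≤ gridDistOn S w u v := by
  obtain ⟨p, hp, hpS⟩ := hne
  refine le_csInf ⟨walkWeight w p, p, hp, hpS, rfl⟩ ?_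
  rintro _ ⟨q, hq, hqS, rfl⟩
  exact h q hq hqS

lemma exists_walkWeight_lt_of_gridDistOn_lt {c : ℝ} (hne : ∃ p, IsWalk u v p ∧ ∀ x ∈ p, x ∈ S)
    (hc : gridDistOn S w u v < c) : ∃ p, IsWalk u v p ∧ (∀ x ∈ p, x ∈ S) ∧ walkWeight w p < c := by
  obtain ⟨p, hp, hpS⟩ := hne
  obtain ⟨_, ⟨q, hq, hqS, rfl⟩, hqc⟩ := exists_lt_of_csInf_lt (by exact ⟨_, p, hp, hpS, rfl⟩) hc
  exact ⟨q, hq, hqS, hqc⟩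

lemma gridDistOn_nonneg (hw : ∀ a b, 0 ≤ w a b) : 0 ≤ gridDistOn S w u v :=
  Real.sInf_nonneg (by rintro _ ⟨p, -, -, rfl⟩; exact walkWeight_nonneg hw p)

lemma gridDistOn_comm (hw : ∀ a b, w a b = w b a) : gridDistOn S w u v = gridDistOn S w v u := by
  have key : ∀ u v : V, { c | ∃ p, IsWalk u v p ∧ (∀ x ∈ p, x ∈ S) ∧ c = walkWeight w p } ⊆
      { c | ∃ p, IsWalk v u p ∧ (∀ x ∈ p, x ∈ S) ∧ c = walkWeight w p } := by
    rintro u v _ ⟨p, hp, hpS, rfl⟩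
    exact ⟨p.reverse, hp.reverse, by simpa using hpS, (walkWeight_reverse hw p).symm⟩
  exact congrArg sInf ((key u v).antisymm (key v u))

lemma gridDistOn_le_add (hw : ∀ a b, 0 ≤ w a b) {x : V}
    (hux : ∃ p, IsWalk u x p ∧ ∀ y ∈ p, y ∈ S) (hxv : ∃ p, IsWalk x v p ∧ ∀ y ∈ p, y ∈ S) :
    gridDistOn S w u v ≤ gridDistOn S w u x + gridDistOn S w x v := by
  refine le_of_forall_pos_lt_add fun ε hε => ?_
  obtain ⟨p, hp, hpS, hpε⟩ := exists_walkWeight_lt_of_gridDistOn_lt hux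
    (lt_add_of_pos_right (gridDistOn S w u x) (half_pos hε))
  obtain ⟨q, hq, hqS, hqε⟩ := exists_walkWeight_lt_of_gridDistOn_lt hxv
    (lt_add_of_pos_right (gridDistOn S w x v) (half_pos hε))
  obtain ⟨p, rfl⟩ := List.getLast?_eq_some_iff.1 hp.2.2
  obtain ⟨q, rfl⟩ := List.head?_eq_some_iff.1 hq.2.1
  calc gridDistOn S w u v ≤ walkWeight w (p ++ x :: q) :=
        gridDistOn_le_walkWeight hw (isWalk_append_cons.2 ⟨hp, hq⟩) (by grind)
    _ < gridDistOn S w u x + gridDistOn S w x v + ε := by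
        rw [walkWeight_append_cons]; linarith

lemma gridDistOn_le_walkWeight_gridDistOn (hw : ∀ a b, 0 ≤ w a b) :
    ∀ {u : V} {p : List V}, IsWalk u v p → (∀ x ∈ p, x ∈ S) →
      gridDistOn S w u v ≤ walkWeight (gridDistOn S w) p
  | u, [a], hp, hpS => by
    obtain ⟨-, ⟨⟩, ⟨⟩⟩ := hp
    simpa using gridDistOn_le_walkWeight hw (isWalk_singleton u) hpS
  | u, a :: b :: p, hp, hpS => by
    obtain ⟨hc, ⟨⟩, hl⟩ := hp
    have hab : IsWalk u b [u, b] := (isWalk_singleton b).cons (List.isChain_cons_cons.1 hc).1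
    have hbv : IsWalk b v (b :: p) := ⟨(List.isChain_cons_cons.1 hc).2, rfl, by simpa using hl⟩
    have hbpS : ∀ x ∈ b :: p, x ∈ S := fun x hx => hpS x (List.mem_cons_of_mem u hx)
    calc gridDistOn S w u v ≤ gridDistOn S w u b + gridDistOn S w b v :=
          gridDistOn_le_add hw ⟨_, hab, by grind⟩ ⟨_, hbv, hbpS⟩
      _ ≤ walkWeight (gridDistOn S w) (u :: b :: p) := by
          simpa using gridDistOn_le_walkWeight_gridDistOn hw hbv hbpS

lemma walkWeight_gridDistOn_le (hw : ∀ a b, 0 ≤ w a b) :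
    ∀ {u : V} {p : List V}, IsWalk u v p → (∀ x ∈ p, x ∈ S) →
      walkWeight (gridDistOn S w) p ≤ walkWeight w p
  | _, [_], _, _ => le_rfl
  | u, a :: b :: p, hp, hpS => by
    obtain ⟨hc, ⟨⟩, hl⟩ := hp
    have hab : IsWalk u b [u, b] := (isWalk_singleton b).cons (List.isChain_cons_cons.1 hc).1
    have hbv : IsWalk b v (b :: p) := ⟨(List.isChain_cons_cons.1 hc).2, rfl, by simpa using hl⟩
    simp only [walkWeight_cons_cons]
    exact add_le_add (by simpa using gridDistOn_le_walkWeight hw hab (by grind))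
      (walkWeight_gridDistOn_le hw hbv fun x hx => hpS x (List.mem_cons_of_mem u hx))

lemma gridDistOn_add_le_walkWeight (hw : ∀ a b, 0 ≤ w a b) {p : List V} (hp : IsWalk u v p)
    (hpS : ∀ x ∈ p, x ∈ S) {x : V} (hx : x ∈ p) :
    gridDistOn S w u x + gridDistOn S w x v ≤ walkWeight w p := by
  obtain ⟨p₁, p₂, rfl⟩ := List.append_of_mem hx
  obtain ⟨hp₁, hp₂⟩ := isWalk_append_cons.1 hp
  rw [walkWeight_append_cons]
  exact add_le_add (gridDistOn_le_walkWeight hw hp₁ (by grind))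
    (gridDistOn_le_walkWeight hw hp₂ (by grind))

lemma gridDistOn_add_right (t : V) :
    gridDistOn S w (u + t) (v + t) =
      gridDistOn ((· + t) ⁻¹' S) (fun a b => w (a + t) (b + t)) u v := by
  have hadj : ∀ s a b, gridAdj a b → gridAdj (a + s) (b + s) := fun s a b h => by
    simpa [gridAdj] using h
  refine congrArg sInf (Set.ext fun c => ⟨?_, ?_⟩)
  · rintro ⟨p, hp, hpS, rfl⟩
    refine ⟨p.map (· + -t), by simpa using hp.map (hadj (-t)), fun y hy => ?_, ?_⟩
    · obtain ⟨z, hz, rfl⟩ := List.mem_map.1 hy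
      simpa using hpS z hz
    simp [walkWeight_map]
  · rintro ⟨p, hp, hpS, rfl⟩
    refine ⟨p.map (· + t), hp.map (hadj t), fun y hy => ?_, (walkWeight_map w _ p).symm⟩
    obtain ⟨z, hz, rfl⟩ := List.mem_map.1 hy
    exact hpS z hz

lemma gridDistOn_univ : gridDistOn Set.univ w u v = gridDist w u v := by
  simp [gridDistOn, gridDist]

end GridDistOn

section Euclid

lemma euclid_add_right (t u v : V) : euclid (u + t) (v + t) = euclid u v := by
  simp [euclid]

lemma dist_le_euclid (u v : V) : dist u v ≤ euclid u v := by
  rw [Prod.dist_eq, Int.dist_eq, Int.dist_eq, euclid, max_le_iff, ← Real.sqrt_sq_eq_abs,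
    ← Real.sqrt_sq_eq_abs]
  constructor <;> gcongr <;> nlinarith

lemma finite_setOf_euclid_le (u : V) (r : ℝ) : {x | euclid u x ≤ r}.Finite :=
  (isCompact_closedBall u r).finite_of_discrete.subset fun x hx =>
    Metric.mem_closedBall.2 ((dist_comm x u ▸ dist_le_euclid u x).trans hx)

lemma euclid_nonneg (u v : V) : 0 ≤ euclid u v := Real.sqrt_nonneg _

end Euclid

lemma finite_setOf_nodup_forall_mem {α : Type*} {s : Set α} (hs : s.Finite) :
    {l : List α | l.Nodup ∧ ∀ x ∈ l, x ∈ s}.Finite := by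
  have := hs.fintype
  refine ((List.finite_length_le s (Fintype.card s)).image (List.map Subtype.val)).subset ?_
  rintro l ⟨hnd, hl⟩
  have hmap : (l.attachWith (· ∈ s) hl).map Subtype.val = l := List.attachWith_map_subtype_val hl
  refine ⟨l.attachWith (· ∈ s) hl, ?_, hmap⟩
  exact (List.Nodup.of_map Subtype.val (by rwa [hmap])).length_le_card

def boxCenter (n : ℕ) : V := ((n : ℤ) / 2, (n : ℤ) / 2)

lemma eventually_add_boxCenter_mem_box (x : V) :
    ∀ᶠ n in atTop, x + boxCenter n ∈ box n := by
  filter_upwards [eventually_ge_atTop (2 * (x.1.natAbs + x.2.natAbs) + 2)] with n hn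
  simp only [box, boxCenter, Set.mem_ofPred_eq, Prod.fst_add, Prod.snd_add]
  omega

structure IsNearEuclideanOn (S : Set V) (U w : V → V → ℝ) : Prop where
  symm : ∀ a b, w a b = w b a
  nonneg : ∀ a b, 0 ≤ w a b
  euclid_sub_one_le : ∀ u v, u ∈ S → v ∈ S → euclid u v - 1 ≤ gridDistOn S w u v
  gridDistOn_le : ∀ u v, u ∈ S → v ∈ S → gridDistOn S w u v ≤ U u v

namespace IsNearEuclideanOn

variable {S : Set V} {U w : V → V → ℝ}

lemma comp_add_right (h : IsNearEuclideanOn S U w) (t : V)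
    (hU : ∀ u v, U (u + t) (v + t) = U u v) :
    IsNearEuclideanOn ((· + t) ⁻¹' S) U (fun a b => w (a + t) (b + t)) where
  symm _ _ := h.symm _ _
  nonneg _ _ := h.nonneg _ _
  euclid_sub_one_le u v hu hv := by
    rw [← gridDistOn_add_right, ← euclid_add_right t]
    exact h.euclid_sub_one_le _ _ hu hv
  gridDistOn_le u v hu hv := by
    rw [← gridDistOn_add_right, ← hU]
    exact h.gridDistOn_le _ _ hu hv

lemma exists_nodup_walk (h : IsNearEuclideanOn S U w) {u v : V}
    (hne : ∃ p, IsWalk u v p ∧ ∀ x ∈ p, x ∈ S) {c : ℝ} (hc : gridDistOn S w u v < c) :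
    ∃ p, IsWalk u v p ∧ p.Nodup ∧ (∀ x ∈ p, euclid u x ≤ c + 2) ∧
      walkWeight (gridDistOn S w) p < c := by
  obtain ⟨q, hq, hqS, hqc⟩ := exists_walkWeight_lt_of_gridDistOn_lt hne hc
  obtain ⟨p, hp, hpnd, hpq, hpw⟩ := hq.exists_nodup_walkWeight_le h.nonneg
  have hpS : ∀ x ∈ p, x ∈ S := fun x hx => hqS x (hpq hx)
  refine ⟨p, hp, hpnd, fun x hx => ?_,
    (walkWeight_gridDistOn_le h.nonneg hp hpS).trans_lt (hpw.trans_lt hqc)⟩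
  have hux := h.euclid_sub_one_le u x (hpS u hp.head_mem) (hpS x hx)
  have hxv := h.euclid_sub_one_le x v (hpS x hx) (hpS v hp.getLast_mem)
  linarith [gridDistOn_add_le_walkWeight h.nonneg hp hpS hx, euclid_nonneg x v]

end IsNearEuclideanOn

section Limit

variable {ι : Type*} {l : Filter ι} {S : ι → Set V} {w : ι → V → V → ℝ} {U : V → V → ℝ}
  {F : Ultrafilter ι} {W : V → V → ℝ}

lemma eventually_forall_mem (hS : ∀ x, ∀ᶠ i in l, x ∈ S i) (p : List V) :
    ∀ᶠ i in l, ∀ x ∈ p, x ∈ S i :=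
  (List.finite_toSet p).eventually_all.2 fun x _ => hS x

lemma exists_tendsto_gridDistOn (hS : ∀ x, ∀ᶠ i in l, x ∈ S i)
    (hw : ∀ᶠ i in l, IsNearEuclideanOn (S i) U (w i)) (hF : ↑F ≤ l) (a b : V) :
    ∃ L, Tendsto (fun i => gridDistOn (S i) (w i) a b) F (𝓝 L) := by
  have hbdd : ∀ᶠ i in l, gridDistOn (S i) (w i) a b ∈ Set.Icc 0 (U a b) := by
    filter_upwards [hw, hS a, hS b] with i hi ha hb
    exact ⟨gridDistOn_nonneg hi.nonneg, hi.gridDistOn_le a b ha hb⟩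
  obtain ⟨L, -, hL⟩ := isCompact_Icc.ultrafilter_le_nhds'
    (F.map fun i => gridDistOn (S i) (w i) a b) (hF hbdd)
  exact ⟨L, hL⟩

lemma euclid_sub_one_le_walkWeight_of_tendsto (hS : ∀ x, ∀ᶠ i in l, x ∈ S i)
    (hw : ∀ᶠ i in l, IsNearEuclideanOn (S i) U (w i)) (hF : ↑F ≤ l)
    (hW : ∀ a b, Tendsto (fun i => gridDistOn (S i) (w i) a b) F (𝓝 (W a b)))
    {u v : V} {p : List V} (hp : IsWalk u v p) :
    euclid u v - 1 ≤ walkWeight W p := by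
  refine ge_of_tendsto (tendsto_walkWeight hW p) (hF ?_)
  filter_upwards [hw, eventually_forall_mem hS p] with i hi hpS
  exact (hi.euclid_sub_one_le u v (hpS u hp.head_mem) (hpS v hp.getLast_mem)).trans
    (gridDistOn_le_walkWeight_gridDistOn hi.nonneg hp hpS)

lemma exists_walkWeight_le_of_tendsto (hS : ∀ x, ∀ᶠ i in l, x ∈ S i)
    (hw : ∀ᶠ i in l, IsNearEuclideanOn (S i) U (w i)) (hF : ↑F ≤ l)
    (hW : ∀ a b, Tendsto (fun i => gridDistOn (S i) (w i) a b) F (𝓝 (W a b)))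
    (u v : V) {ε : ℝ} (hε : 0 < ε) :
    ∃ p, IsWalk u v p ∧ walkWeight W p ≤ U u v + ε := by
  set c := U u v + ε
  set P := {p | IsWalk u v p ∧ p.Nodup ∧ ∀ x ∈ p, euclid u x ≤ c + 2}
  have hP : P.Finite := (finite_setOf_nodup_forall_mem (finite_setOf_euclid_le u (c + 2))).subset
    fun p hp => ⟨hp.2.1, hp.2.2⟩
  obtain ⟨q, hq⟩ := exists_isWalk u v
  have hshort : ∀ᶠ i in l, ∃ p ∈ P, walkWeight (gridDistOn (S i) (w i)) p ≤ c := by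
    filter_upwards [hw, eventually_forall_mem hS q] with i hi hqS
    have hc : gridDistOn (S i) (w i) u v < c :=
      (hi.gridDistOn_le u v (hqS u hq.head_mem) (hqS v hq.getLast_mem)).trans_lt
        (lt_add_of_pos_right _ hε)
    obtain ⟨p, hp, hpnd, hpc, hpw⟩ := hi.exists_nodup_walk ⟨q, hq, hqS⟩ hc
    exact ⟨p, ⟨hp, hpnd, hpc⟩, hpw.le⟩
  -- `P` is finite, so a single candidate is short for `F`-almost every `i`.
  obtain ⟨p, hp, hpF⟩ := (Ultrafilter.finite_biUnion_mem_iff hP).1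
    (Filter.mem_of_superset (hF hshort) fun i ⟨p, hp, hpi⟩ => Set.mem_biUnion hp hpi)
  exact ⟨p, hp.1, le_of_tendsto (tendsto_walkWeight hW p) hpF⟩

end Limit

theorem exists_isNearEuclideanOn_univ {ι : Type*} {l : Filter ι} [l.NeBot] {S : ι → Set V}
    {w : ι → V → V → ℝ} {U : V → V → ℝ} (hS : ∀ x, ∀ᶠ i in l, x ∈ S i)
    (hw : ∀ᶠ i in l, IsNearEuclideanOn (S i) U (w i)) :
    ∃ W, IsNearEuclideanOn Set.univ U W := by
  obtain ⟨F, hF⟩ := Ultrafilter.exists_le l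
  choose W hW using exists_tendsto_gridDistOn hS hw hF
  have hWnn : ∀ a b, 0 ≤ W a b := fun a b =>
    ge_of_tendsto (hW a b) (hF (hw.mono fun i hi => gridDistOn_nonneg hi.nonneg))
  refine ⟨W, ⟨fun a b => ?_, hWnn, fun u v _ _ => ?_, fun u v _ _ => ?_⟩⟩
  · exact tendsto_nhds_unique (hW a b)
      ((hW b a).congr' (hF (hw.mono fun i hi => gridDistOn_comm hi.symm)))
  · obtain ⟨p, hp⟩ := exists_isWalk u v
    exact le_gridDistOn ⟨p, hp, fun _ _ => trivial⟩ fun p hp _ =>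
      euclid_sub_one_le_walkWeight_of_tendsto hS hw hF hW hp
  · refine le_of_forall_pos_le_add fun ε hε => ?_
    obtain ⟨p, hp, hpε⟩ := exists_walkWeight_le_of_tendsto hS hw hF hW u v hε
    exact (gridDistOn_le_walkWeight hWnn hp fun _ _ => trivial).trans hpε

/-- If `C ≥ 1` and every finite grid `Grid_n` (`n ≥ 3`) admits a
symmetric nonnegative weight function `W_n` with
`‖u-v‖₂ - 1 ≤ dist_{W_n} u v ≤ ‖u-v‖₂ + C·(1 + ‖u-v‖₂^(8/9))`, then the infinite
grid admits a symmetric nonnegative weight function `W` with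
`‖u-v‖₂ - 1 ≤ dist_W u v ≤ ‖u-v‖₂ + C'·(1 + ‖u-v‖₂^(8/9))` for some constant
`C' > 0`. -/
theorem stmt13 (C : ℝ) (hC : 1 ≤ C)
    (h : ∀ n : ℕ, 3 ≤ n →
      ∃ W : V → V → ℝ,
        (∀ u v, W u v = W v u) ∧ (∀ u v, 0 ≤ W u v) ∧
        ∀ u v : V, u ∈ box n → v ∈ box n →
          euclid u v - 1 ≤ gridDistOn (box n) W u v ∧
          gridDistOn (box n) W u v ≤
            euclid u v + C * (1 + euclid u v ^ ((8 : ℝ) / 9))) :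
    ∃ C' : ℝ, 0 < C' ∧
      ∃ W : V → V → ℝ,
        (∀ u v, W u v = W v u) ∧ (∀ u v, 0 ≤ W u v) ∧
        ∀ u v : V,
          euclid u v - 1 ≤ gridDist W u v ∧
          gridDist W u v ≤ euclid u v + C' * (1 + euclid u v ^ ((8 : ℝ) / 9)) := by
  set U : V → V → ℝ := fun u v => euclid u v + C * (1 + euclid u v ^ ((8 : ℝ) / 9))
  have hU : ∀ t u v, U (u + t) (v + t) = U u v := fun t u v => by simp only [U, euclid_add_right]
  have hbox : ∀ n, ∃ W, 3 ≤ n → IsNearEuclideanOn (box n) U W := fun n => by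
    by_cases hn : 3 ≤ n
    · obtain ⟨W, hsymm, hnonneg, hbd⟩ := h n hn
      exact ⟨W, fun _ => ⟨hsymm, hnonneg, fun u v hu hv => (hbd u v hu hv).1,
        fun u v hu hv => (hbd u v hu hv).2⟩⟩
    · exact ⟨0, fun h3 => absurd h3 hn⟩
  choose W hW using hbox
  obtain ⟨W', hW'⟩ := exists_isNearEuclideanOn_univ (l := atTop)
    (w := fun n a b => W n (a + boxCenter n) (b + boxCenter n)) eventually_add_boxCenter_mem_box
    (by filter_upwards [eventually_ge_atTop 3] with n hn using (hW n hn).comp_add_right _ (hU _))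
  refine ⟨C, by linarith, W', hW'.symm, hW'.nonneg, fun u v => ?_⟩
  rw [← gridDistOn_univ]
  exact ⟨hW'.euclid_sub_one_le u v trivial trivial, hW'.gridDistOn_le u v trivial trivial⟩
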